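/- In the simply-typed scheme-calculus, the one-step beta-reduction relation on schemes in contexts is not strongly normalizing: there exists a well-typed scheme in context that reduces to itself in one step. Specifically, for any atomic type A, letting t = ((λ_A ⟨A⟩) ⟨A⟩) in context {A}, the scheme ((λ_A t) t) in context {A} reduces in one step to itself. -/
import Mathlib

/-! Simply-typed scheme-calculus. -/

inductive STy : Type
  | atom : ℕ → STy
  | arr : STy → STy → STy
deriving DecidableEq

inductive Schm : Type
  | var : STy → Schm
  | lam : STy → Schm → Schm
  | app : Schm → Schm → Schm
deriving DecidableEq

/-- Typing rules of the simply-typed scheme-calculus (contexts are finite sets). -/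
inductive Typed : Finset STy → Schm → STy → Prop
  | var {Γ A} : A ∈ Γ → Typed Γ (.var A) A
  | lam {Γ A B t} : Typed (insert A Γ) t B → Typed Γ (.lam A t) (.arr A B)
  | app {Γ A B t u} : Typed Γ t (.arr A B) → Typed Γ u A → Typed Γ (.app t u) B

/-- `SSubst u A Γ t v` means `v ∈ [u/A]_Γ t` (non-deterministic substitution). -/
inductive SSubst (u : Schm) (A : STy) : Finset STy → Schm → Schm → Prop
  | varKeep {Γ} : A ∈ Γ → SSubst u A Γ (.var A) (.var A)
  | varSub {Γ} : SSubst u A Γ (.var A) u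
  | varOther {Γ B} : B ≠ A → SSubst u A Γ (.var B) (.var B)
  | lam {Γ C t t'} : SSubst u A (insert C Γ) t t' → SSubst u A Γ (.lam C t) (.lam C t')
  | app {Γ t t' s s'} : SSubst u A Γ t t' → SSubst u A Γ s s' →
      SSubst u A Γ (.app t s) (.app t' s')

/-- One-step β-reduction of schemes in context. -/
inductive Red : Finset STy → Schm → Schm → Prop
  | beta {Γ A t u v} : SSubst u A Γ t v → Red Γ (.app (.lam A t) u) v
  | appL {Γ t t' u} : Red Γ t t' → Red Γ (.app t u) (.app t' u)
  | appR {Γ t u u'} : Red Γ u u' → Red Γ (.app t u) (.app t u')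
  | lam {Γ A t t'} : Red (insert A Γ) t t' → Red Γ (.lam A t) (.lam A t')

/-- Multi-step β-reduction. -/
def RedStar (Γ : Finset STy) : Schm → Schm → Prop := Relation.ReflTransGen (Red Γ)

/-- the one-step β-reduction of the simply-typed scheme-calculus is not
strongly normalizing: for any atomic type `A`, with `t = ((λ_A ⟨A⟩) ⟨A⟩)`, the well-typed
scheme in context `((λ_A t) t)_{A}` reduces in one step to itself. -/
theorem scheme_calculus_not_strongly_normalizing (p : ℕ) :
    let A := STy.atom p
    let t := Schm.app (.lam A (.var A)) (.var A)
    Typed {A} (.app (.lam A t) t) A ∧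
      Red {A} (.app (.lam A t) t) (.app (.lam A t) t) := by
  intro A t
  have hA : A ∈ ({A} : Finset STy) := Finset.mem_singleton_self A
  have ht : ∀ Γ : Finset STy, A ∈ Γ → Typed Γ t A := fun Γ h =>
    Typed.app (Typed.lam (Typed.var (Finset.mem_insert_self A Γ))) (Typed.var h)
  refine ⟨Typed.app (Typed.lam (ht _ (Finset.mem_insert_self A _))) (ht _ hA), ?_⟩
  exact Red.beta (SSubst.app (SSubst.lam SSubst.varSub) SSubst.varSub)
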